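/- If two nodes X and Y are d-separated given Z in a DAG, then in every Bayesian network parameterization of the DAG, X and Y are conditionally independent given Z. -/

import Mathlib

/-!
Let `A` be the ancestral closure of `Z ∪ {X, Y}`. Summing out the nodes outside `A`, sinks
first, shows that an event depending only on `A` has the probability computed from the factors
`P(v | pa v)`, `v ∈ A`, alone. In the moral graph of `A` with `Z` deleted, `X` cannot reach `Y`:
a moral path can be turned into an active walk from `X` to `Y`, and cutting loops out of an active
walk leaves an active path. Let `S` be the moral component of `X`. Outside `Z`, the family of
every node of `A` lies entirely inside or entirely outside `S`, so exchanging the `S`-coordinates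
of two configurations that agree on `Z` preserves the product of their weights. This involution
on pairs of configurations turns `P(x, y, z) P(z)` into `P(x, z) P(y, z)`.
-/

/-- A directed acyclic graph on node set `V`. -/
structure DAG (V : Type) where
  E : V → V → Prop
  acyclic : ∀ v, ¬ Relation.TransGen E v v

namespace DAG

variable {V : Type}

/-- A three-node segment `a — b — c` of an undirected path is active given `Z`:
colliders are active iff some descendant of the middle node (including itself) is in `Z`,
chains and forks are active iff the middle node is not in `Z`. -/
def ActiveTriple (G : DAG V) (Z : Set V) (a b c : V) : Prop :=
  (G.E a b ∧ G.E c b ∧ ∃ w, Relation.ReflTransGen G.E b w ∧ w ∈ Z) ∨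
  (¬ (G.E a b ∧ G.E c b) ∧ b ∉ Z)

/-- An undirected path: consecutive nodes are joined by an edge in either direction. -/
def IsUPath (G : DAG V) : List V → Prop
  | [] => False
  | [_] => True
  | x :: y :: rest => (G.E x y ∨ G.E y x) ∧ IsUPath G (y :: rest)

/-- A path is active given `Z` if every three-node segment is active. -/
def ActivePath (G : DAG V) (Z : Set V) : List V → Prop
  | x :: y :: z :: rest => ActiveTriple G Z x y z ∧ ActivePath G Z (y :: z :: rest)
  | _ => True

/-- `x` and `y` are d-connected given `Z` if some undirected path between them is active. -/
def DConn (G : DAG V) (Z : Set V) (x y : V) : Prop :=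
  ∃ p : List V, p.Nodup ∧ G.IsUPath p ∧ p.head? = some x ∧ p.getLast? = some y ∧
    G.ActivePath Z p

end DAG

/-- A Bayesian network over the DAG `G`: finite domains `val v` and conditional
probability tables for each node, depending only on the node's own value and its parents. -/
structure BN (V : Type) [Fintype V] [DecidableEq V] (G : DAG V)
    (val : V → Type) [∀ v, Fintype (val v)] where
  cpt : ∀ _v : V, (∀ u : V, val u) → ℝ
  cpt_nonneg : ∀ v a, 0 ≤ cpt v a
  cpt_local : ∀ v a b, a v = b v → (∀ u, G.E u v → a u = b u) → cpt v a = cpt v b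
  cpt_sum : ∀ (v : V) (a : ∀ u : V, val u), ∑ x : val v, cpt v (Function.update a v x) = 1

namespace BN

variable {V : Type} [Fintype V] [DecidableEq V] {G : DAG V} {val : V → Type}
  [∀ v, Fintype (val v)]

/-- The joint probability of a full assignment: the product of the conditionals. -/
noncomputable def joint (B : BN V G val) (a : ∀ v, val v) : ℝ :=
  ∏ v, B.cpt v a

open Classical in
/-- The probability of an event (a predicate on full assignments). -/
noncomputable def pr (B : BN V G val) (φ : (∀ v, val v) → Prop) : ℝ :=
  ∑ a : ∀ v, val v, if φ a then B.joint a else 0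

end BN

open Function Finset

theorem Fintype.sum_eq_sum_ite_sum_update {ι : Type*} [DecidableEq ι] [Fintype ι] {β : ι → Type*}
    [∀ i, Fintype (β i)] [∀ i, DecidableEq (β i)] {M : Type*} [AddCommMonoid M] (t : ι)
    (x₀ : β t) (F : (∀ i, β i) → M) :
    ∑ a, F a = ∑ a, if a t = x₀ then ∑ x, F (update a t x) else 0 := by
  have hfiber : ∀ x, ∑ a, (if a t = x₀ then F (update a t x) else 0) =
      ∑ a, if a t = x then F a else 0 := fun x => by
    rw [← sum_filter, ← sum_filter]
    exact sum_nbij' (update · t x) (update · t x₀) (by simp) (by simp)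
      (fun a ha => by simp_all) (fun a ha => by simp_all) (fun _ _ => rfl)
  calc ∑ a, F a = ∑ x, ∑ a, if a t = x then F a else 0 := by rw [sum_comm]; simp
    _ = ∑ x, ∑ a, if a t = x₀ then F (update a t x) else 0 := by simp only [hfiber]
    _ = _ := by rw [sum_comm]; congr 1 with a; split_ifs <;> simp

theorem sum_ite_and_mul_sum_eq_of_piecewise {ι : Type*} {β : ι → Type*} [Fintype (∀ i, β i)]
    {R : Type*} [CommSemiring R] (S : Set ι) [DecidablePred (· ∈ S)] (w : (∀ i, β i) → R)
    (hw : ∀ a b, w (S.piecewise a b) * w (S.piecewise b a) = w a * w b)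
    {P Q : (∀ i, β i) → Prop} [DecidablePred P] [DecidablePred Q]
    (hP : DependsOn P S) (hQ : DependsOn Q Sᶜ) :
    (∑ a, if P a ∧ Q a then w a else 0) * ∑ a, w a =
      (∑ a, if P a then w a else 0) * ∑ a, if Q a then w a else 0 := by
  let swap : (∀ i, β i) × (∀ i, β i) → (∀ i, β i) × (∀ i, β i) :=
    fun p => (S.piecewise p.1 p.2, S.piecewise p.2 p.1)
  have hswap : Involutive swap := fun p => by
    ext i <;> by_cases hi : i ∈ S <;> simp [swap, hi]
  rw [sum_mul_sum, sum_mul_sum, ← Fintype.sum_prod_type', ← Fintype.sum_prod_type',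
    ← Equiv.sum_comp (hswap.toPerm swap)]
  refine sum_congr rfl fun ⟨a, b⟩ _ => ?_
  have hPa : P (S.piecewise a b) = P a := hP fun i hi => S.piecewise_eq_of_mem _ _ hi
  have hQb : Q (S.piecewise a b) = Q b := hQ fun i hi => S.piecewise_eq_of_notMem _ _ hi
  simp only [Involutive.coe_toPerm, swap, hPa, hQb]
  by_cases hPa : P a <;> by_cases hQb : Q b <;> simp [hPa, hQb, hw]

namespace DAG

open Relation List

variable {V : Type} {G : DAG V} {Z : Set V}

theorem irrefl (G : DAG V) (a : V) : ¬ G.E a a := fun h => G.acyclic a (.single h)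

theorem asymm {a b : V} (h : G.E a b) : ¬ G.E b a := fun h' => G.acyclic a (.head h (.single h'))

theorem ActiveTriple.symm {a b c : V} (h : G.ActiveTriple Z a b c) : G.ActiveTriple Z c b a := by
  rcases h with ⟨hab, hcb, hdesc⟩ | ⟨hcol, hb⟩
  · exact .inl ⟨hcb, hab, hdesc⟩
  · exact .inr ⟨fun h => hcol ⟨h.2, h.1⟩, hb⟩

theorem activeTriple_of_out_edge {a b c : V} (h : G.E b a) (hb : b ∉ Z) :
    G.ActiveTriple Z a b c :=
  .inr ⟨fun hcol => G.asymm h hcol.1, hb⟩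

theorem activeTriple_of_exists_desc_mem {a b c : V} (hb : b ∉ Z)
    (hdesc : ∃ w, ReflTransGen G.E b w ∧ w ∈ Z) : G.ActiveTriple Z a b c := by
  by_cases hcol : G.E a b ∧ G.E c b
  · exact .inl ⟨hcol.1, hcol.2, hdesc⟩
  · exact .inr ⟨hcol, hb⟩

namespace IsUPath

theorem of_cons {x : V} {l : List V} (h : G.IsUPath (x :: l)) (hl : l ≠ []) : G.IsUPath l := by
  match l, h with
  | _ :: _, h => exact h.2

theorem of_append_right : ∀ {l r : List V}, G.IsUPath (l ++ r) → r ≠ [] → G.IsUPath r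
  | [], _, h, _ => h
  | _ :: _, _, h, hr => of_append_right (h.of_cons (by simp [hr])) hr

theorem of_append_left : ∀ {l r : List V}, G.IsUPath (l ++ r) → l ≠ [] → G.IsUPath l
  | [_], _, _, _ => trivial
  | _ :: y :: l, _, h, _ => ⟨h.1, of_append_left (l := y :: l) h.2 (cons_ne_nil _ _)⟩

theorem append_cons : ∀ {l r : List V} {v : V},
    G.IsUPath (l ++ [v]) → G.IsUPath (v :: r) → G.IsUPath (l ++ v :: r)
  | [], _, _, _, h => h
  | [_], _, _, h₁, h₂ => ⟨h₁.1, h₂⟩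
  | _ :: y :: l, _, _, h₁, h₂ => ⟨h₁.1, append_cons (l := y :: l) h₁.2 h₂⟩

theorem reverse : ∀ {l : List V}, G.IsUPath l → G.IsUPath l.reverse
  | [_], _ => trivial
  | x :: y :: l, h => by
      rw [reverse_cons, reverse_cons, append_assoc, singleton_append]
      exact append_cons (by simpa using reverse (l := y :: l) h.2) ⟨h.1.symm, trivial⟩

end IsUPath

theorem IsUPath.infix {p l : List V} (h : G.IsUPath p) (hl : l <:+: p) (hne : l ≠ []) :
    G.IsUPath l := by
  obtain ⟨s, t, rfl⟩ := hl
  exact (h.of_append_left (by simp [hne])).of_append_right hne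

namespace ActivePath

theorem of_cons {x : V} {l : List V} (h : G.ActivePath Z (x :: l)) : G.ActivePath Z l := by
  match l, h with
  | [], _ | [_], _ => trivial
  | _ :: _ :: _, h => exact h.2

theorem cons {u v : V} {l : List V} (h : G.ActivePath Z (v :: l))
    (ht : ∀ n ∈ l.head?, G.ActiveTriple Z u v n) : G.ActivePath Z (u :: v :: l) := by
  match l, h with
  | [], _ => trivial
  | n :: _, h => exact ⟨ht n rfl, h⟩

theorem of_append_right : ∀ {l r : List V}, G.ActivePath Z (l ++ r) → G.ActivePath Z r
  | [], _, h => h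
  | _ :: _, _, h => of_append_right h.of_cons

theorem of_append_left : ∀ {l r : List V}, G.ActivePath Z (l ++ r) → G.ActivePath Z l
  | [], _, _ | [_], _, _ | [_, _], _, _ => trivial
  | _ :: y :: w :: l, _, h => ⟨h.1, of_append_left (l := y :: w :: l) h.2⟩

theorem append_cons : ∀ {l r : List V} {v : V},
    G.ActivePath Z (l ++ [v]) → G.ActivePath Z (v :: r) →
    (∀ b ∈ l.getLast?, ∀ c ∈ r.head?, G.ActiveTriple Z b v c) → G.ActivePath Z (l ++ v :: r)
  | [], _, _, _, h, _ => h
  | [b], _, _, _, h, hj => h.cons (hj b rfl)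
  | [_, _], [], _, h, _, _ => h
  | [_, b], c :: _, _, h₁, h₂, hj => ⟨h₁.1, hj b rfl c rfl, h₂⟩
  | _ :: y :: w :: l, _, _, h₁, h₂, hj =>
      ⟨h₁.1, append_cons (l := y :: w :: l) h₁.2 h₂ (by simpa using hj)⟩

theorem reverse : ∀ {l : List V}, G.ActivePath Z l → G.ActivePath Z l.reverse
  | [], _ | [_], _ => trivial
  | x :: y :: l, h => by
      rw [reverse_cons, reverse_cons, append_assoc, singleton_append]
      refine append_cons (by simpa using reverse (l := y :: l) h.of_cons) trivial ?_
      intro b hb c hc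
      obtain ⟨l', rfl⟩ : ∃ l', l = b :: l' := by
        simpa [getLast?_reverse, head?_eq_some_iff] using hb
      simp only [head?_cons, Option.mem_def, Option.some.injEq] at hc
      exact hc ▸ h.1.symm

theorem exists_desc_mem_or_transGen_getLast :
    ∀ {l : List V} {v u : V}, G.IsUPath (v :: u :: l) → G.ActivePath Z (v :: u :: l) → G.E v u →
      (∃ w, ReflTransGen G.E v w ∧ w ∈ Z) ∨ ∃ t ∈ (v :: u :: l).getLast?, TransGen G.E v t
  | [], _, u, _, _, hvu => .inr ⟨u, rfl, .single hvu⟩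
  | c :: _, _, _, hp, ha, hvu => by
      rcases ha.1 with ⟨-, -, w, huw, hwZ⟩ | ⟨hcol, -⟩
      · exact .inl ⟨w, .head hvu huw, hwZ⟩
      have huc : G.E _ c := hp.2.1.resolve_right fun hcu => hcol ⟨hvu, hcu⟩
      rcases exists_desc_mem_or_transGen_getLast hp.2 ha.2 huc with ⟨w, huw, hwZ⟩ | ⟨t, ht, hut⟩
      · exact .inl ⟨w, .head hvu huw, hwZ⟩
      · exact .inr ⟨t, by simpa using ht, .head hvu hut⟩

end ActivePath

theorem ActivePath.infix {p l : List V} (h : G.ActivePath Z p) (hl : l <:+: p) :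
    G.ActivePath Z l := by
  obtain ⟨s, t, rfl⟩ := hl
  exact h.of_append_left.of_append_right

/-- The junction at `v` after splicing the loop `v, e, …, b', v` out of an active walk
`…, b, v, e, …, b', v, c, …`. If `v` is a collider `b → v ← c` there but not at its first visit,
the loop leaves `v` along `v → e`; since it returns to `v`, it meets a collider with a descendant
in `Z`, which is then also a descendant of `v`. -/
theorem activeTriple_of_loop {b v e b' c : V} {l : List V}
    (h₁ : G.ActiveTriple Z b v e) (h₂ : G.ActiveTriple Z b' v c)
    (hu : G.IsUPath (v :: e :: l)) (ha : G.ActivePath Z (v :: e :: l))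
    (hl : (v :: e :: l).getLast? = some v) : G.ActiveTriple Z b v c := by
  by_cases hvZ : v ∈ Z
  · rcases h₁ with ⟨hbv, -⟩ | ⟨-, h⟩
    · rcases h₂ with ⟨-, hcv, -⟩ | ⟨-, h⟩
      · exact .inl ⟨hbv, hcv, v, .refl, hvZ⟩
      · exact absurd hvZ h
    · exact absurd hvZ h
  by_cases hcol : G.E b v ∧ G.E c v
  · refine .inl ⟨hcol.1, hcol.2, ?_⟩
    rcases h₁ with ⟨-, -, hdesc⟩ | ⟨hnc, -⟩
    · exact hdesc
    have hve : G.E v e := hu.1.resolve_right fun hev => hnc ⟨hcol.1, hev⟩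
    rcases ha.exists_desc_mem_or_transGen_getLast hu hve with hdesc | ⟨t, ht, hvt⟩
    · exact hdesc
    · obtain rfl : t = v := by simpa [hl] using ht.symm
      exact absurd hvt (G.acyclic t)
  · exact .inr ⟨hcol, hvZ⟩

theorem exists_shorter_of_not_nodup {p : List V} (hu : G.IsUPath p) (ha : G.ActivePath Z p)
    (hp : ¬ p.Nodup) :
    ∃ q : List V, G.IsUPath q ∧ G.ActivePath Z q ∧ q.head? = p.head? ∧
      q.getLast? = p.getLast? ∧ q.length < p.length := by
  obtain ⟨v, l₁, l₂, l₃, rfl⟩ : ∃ v l₁ l₂ l₃, p = l₁ ++ v :: l₂ ++ v :: l₃ := by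
    obtain ⟨v, hv⟩ := by simpa [nodup_iff_sublist] using hp
    obtain ⟨r₁, r₂, rfl, h₁, h₂⟩ := cons_sublist_iff.1 hv
    obtain ⟨l₁, l₂, rfl⟩ := append_of_mem h₁
    obtain ⟨s, l₃, rfl⟩ := append_of_mem (singleton_sublist.1 h₂)
    exact ⟨v, l₁, l₂ ++ s, l₃, by simp⟩
  have hlast : (l₁ ++ v :: l₃).getLast? = (l₁ ++ v :: l₂ ++ v :: l₃).getLast? := by
    simp only [append_assoc, cons_append, getLast?_append_of_ne_nil _ (cons_ne_nil _ _),
      getLast?_cons, Option.getD_some]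
  refine ⟨l₁ ++ v :: l₃, ?_, ?_, by cases l₁ <;> simp, hlast, by simp⟩
  · exact .append_cons (hu.infix ⟨[], l₂ ++ v :: l₃, by simp⟩ (by simp))
      (hu.infix ⟨l₁ ++ v :: l₂, [], by simp⟩ (by simp))
  refine .append_cons (ha.infix ⟨[], l₂ ++ v :: l₃, by simp⟩)
    (ha.infix ⟨l₁ ++ v :: l₂, [], by simp⟩) ?_
  intro b hb c hc
  obtain ⟨l₁, rfl⟩ := getLast?_eq_some_iff.1 hb
  obtain ⟨l₃, rfl⟩ : ∃ l₃', l₃ = c :: l₃' := by simpa [head?_eq_some_iff] using hc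
  rcases l₂ with _ | ⟨e, l₂⟩
  · exact absurd (hu.infix ⟨l₁ ++ [b], c :: l₃, by simp⟩ (by simp) : G.IsUPath [v, v]).1
      (by simp [G.irrefl])
  obtain ⟨m, b', hm⟩ : ∃ m b', e :: l₂ = m ++ [b'] :=
    ⟨_, _, (dropLast_append_getLast (cons_ne_nil e l₂)).symm⟩
  have h₁ : G.ActivePath Z [b, v, e] := ha.infix ⟨l₁, l₂ ++ v :: c :: l₃, by simp⟩
  have h₂ : G.ActivePath Z [b', v, c] := ha.infix ⟨l₁ ++ b :: v :: m, l₃, by simp [hm]⟩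
  exact activeTriple_of_loop h₁.1 h₂.1 (l := l₂ ++ [v])
    (hu.infix ⟨l₁ ++ [b], c :: l₃, by simp⟩ (by simp))
    (ha.infix ⟨l₁ ++ [b], c :: l₃, by simp⟩) (getLast?_concat (l := v :: e :: l₂))

def ActiveConn (G : DAG V) (Z : Set V) (u v : V) : Prop :=
  ∃ p : List V, G.IsUPath p ∧ G.ActivePath Z p ∧ p.head? = some u ∧ p.getLast? = some v

namespace ActiveConn

theorem refl (v : V) : G.ActiveConn Z v v := ⟨[v], trivial, trivial, rfl, rfl⟩

theorem symm {u v : V} (h : G.ActiveConn Z u v) : G.ActiveConn Z v u := by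
  obtain ⟨p, hu, ha, hh, hl⟩ := h
  exact ⟨p.reverse, hu.reverse, ha.reverse, by simpa using hl, by simpa using hh⟩

theorem dConn {u v : V} (h : G.ActiveConn Z u v) : G.DConn Z u v := by
  classical
  have hex : ∃ n, ∃ p : List V, p.length = n ∧ G.IsUPath p ∧ G.ActivePath Z p ∧
      p.head? = some u ∧ p.getLast? = some v := by
    obtain ⟨p, hp⟩ := h
    exact ⟨_, p, rfl, hp⟩
  obtain ⟨p, hlen, hu, ha, hh, hl⟩ := Nat.find_spec hex
  refine ⟨p, by_contra fun hnd => ?_, hu, hh, hl, ha⟩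
  obtain ⟨q, hqu, hqa, hqh, hql, hqlen⟩ := exists_shorter_of_not_nodup hu ha hnd
  exact Nat.find_min hex (hlen ▸ hqlen) ⟨q, rfl, hqu, hqa, hqh ▸ hh, hql ▸ hl⟩

theorem cons {u v w : V} (h : G.ActiveConn Z v w) (he : G.E u v ∨ G.E v u)
    (ht : ∀ n, G.ActiveTriple Z u v n) : G.ActiveConn Z u w := by
  obtain ⟨_ | ⟨v', l⟩, hu, ha, hh, hl⟩ := h
  · exact absurd hu id
  obtain rfl : v = v' := by simpa using hh.symm
  exact ⟨u :: v :: l, ⟨he, hu⟩, ha.cons fun n _ => ht n, rfl, by simpa using hl⟩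

theorem cons_collider {u c v w : V} (h : G.ActiveConn Z v w) (huc : G.E u c) (hvc : G.E v c)
    (hv : v ∉ Z) (hc : ∃ d, ReflTransGen G.E c d ∧ d ∈ Z) : G.ActiveConn Z u w := by
  obtain ⟨_ | ⟨v', l⟩, hu, ha, hh, hl⟩ := h
  · exact absurd hu id
  obtain rfl : v = v' := by simpa using hh.symm
  refine ⟨u :: c :: v :: l, ⟨.inl huc, .inr hvc, hu⟩, ?_, rfl, by simpa using hl⟩
  refine (ha.cons fun _ _ => activeTriple_of_out_edge hvc hv).cons fun n hn => ?_
  obtain rfl : n = v := by simpa using hn.symm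
  exact .inl ⟨huc, hvc, hc⟩

theorem of_reflTransGen {u v w : V} (h : G.ActiveConn Z u w) (huv : ReflTransGen G.E u v)
    (hZ : ∀ d, ReflTransGen G.E u d → d ∉ Z) : G.ActiveConn Z v w := by
  induction huv with
  | refl => exact h
  | tail hub hbc ih => exact ih.cons (.inr hbc) fun _ => activeTriple_of_out_edge hbc (hZ _ hub)

end ActiveConn

def ancestors (G : DAG V) (T : Set V) : Set V := {v | ∃ d ∈ T, ReflTransGen G.E v d}

def IsAncestral (G : DAG V) (A : Set V) : Prop := ∀ ⦃u v⦄, G.E u v → v ∈ A → u ∈ A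

theorem subset_ancestors (T : Set V) : T ⊆ G.ancestors T := fun d hd => ⟨d, hd, .refl⟩

theorem isAncestral_ancestors (T : Set V) : G.IsAncestral (G.ancestors T) :=
  fun _ _ h ⟨d, hd, hvd⟩ => ⟨d, hd, .head h hvd⟩

theorem exists_sink [Finite V] (G : DAG V) {T : Finset V} (hT : T.Nonempty) :
    ∃ t ∈ T, ∀ u ∈ T, ¬ G.E t u := by
  have : IsTrans V fun a b => TransGen G.E b a := ⟨fun _ _ _ h₁ h₂ => h₂.trans h₁⟩
  have : Std.Irrefl fun a b : V => TransGen G.E b a := ⟨G.acyclic⟩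
  obtain ⟨t, ht, hmin⟩ :=
    (Finite.wellFounded_of_trans_of_irrefl fun a b : V => TransGen G.E b a).has_min T hT
  exact ⟨t, ht, fun u hu htu => hmin u hu (.single htu)⟩

def family (G : DAG V) (v : V) : Set V := {u | u = v ∨ G.E u v}

def MoralAdj (G : DAG V) (A Z : Set V) (u w : V) : Prop :=
  u ∉ Z ∧ w ∉ Z ∧ ∃ c ∈ A, u ∈ G.family c ∧ w ∈ G.family c

/-- If the node `c` whose family contains `u` and `v` has a descendant in `Z`, the walk from `v`
extends through `c`; otherwise `c` is an ancestor of `X` or of `Y` along a directed path avoiding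
`Z`, which gives a new active walk from `u` to `X`, or extends the walk from `v` to start at `Y`. -/
theorem ActiveConn.moralAdj {X Y u v : V} (hv : G.ActiveConn Z v X)
    (hvu : G.MoralAdj (G.ancestors (insert X (insert Y Z))) Z v u) :
    G.ActiveConn Z u X ∨ G.ActiveConn Z Y X := by
  obtain ⟨hvZ, huZ, c, ⟨d, hd, hcd⟩, hvc, huc⟩ := hvu
  by_cases hdesc : ∃ d, ReflTransGen G.E c d ∧ d ∈ Z
  · left
    rcases hvc with rfl | hvc <;> rcases huc with rfl | huc
    · exact hv
    · exact hv.cons (.inl huc) fun _ => activeTriple_of_exists_desc_mem hvZ hdesc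
    · exact hv.cons (.inr hvc) fun _ => activeTriple_of_out_edge hvc hvZ
    · exact hv.cons_collider huc hvc hvZ hdesc
  have hc : ∀ d, ReflTransGen G.E c d → d ∉ Z := fun d hcd hdZ => hdesc ⟨d, hcd, hdZ⟩
  rcases hd with hdX | hdY | hdZ
  · left
    rw [hdX] at hcd
    have hcu : G.ActiveConn Z c u := by
      rcases huc with rfl | huc
      · exact .refl _
      · exact ⟨[c, u], ⟨.inr huc, trivial⟩, trivial, rfl, rfl⟩
    exact (hcu.of_reflTransGen hcd hc).symm
  · right
    rw [hdY] at hcd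
    have hcX : G.ActiveConn Z c X := by
      rcases hvc with rfl | hvc
      · exact hv
      · exact hv.cons (.inr hvc) fun _ => activeTriple_of_out_edge hvc hvZ
    exact hcX.of_reflTransGen hcd hc
  · exact absurd hdZ (hc d hcd)

theorem dConn_of_reflTransGen_moralAdj {X Y : V}
    (h : ReflTransGen (G.MoralAdj (G.ancestors (insert X (insert Y Z))) Z) X Y) :
    G.DConn Z X Y := by
  suffices ∀ u, ReflTransGen (G.MoralAdj (G.ancestors (insert X (insert Y Z))) Z) X u →
      G.ActiveConn Z u X ∨ G.ActiveConn Z Y X from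
    ((this Y h).elim id id).symm.dConn
  intro u hu
  induction hu with
  | refl => exact .inl (.refl X)
  | tail _ hvu ih => exact ih.elim (·.moralAdj hvu) .inr

end DAG

namespace BN

variable {V : Type} [Fintype V] [DecidableEq V] {G : DAG V} {val : V → Type}
  [∀ v, Fintype (val v)]

theorem cpt_congr (B : BN V G val) {v : V} {a b : ∀ u, val u}
    (h : ∀ u ∈ G.family v, a u = b u) : B.cpt v a = B.cpt v b :=
  B.cpt_local v a b (h v (.inl rfl)) fun u hu => h u (.inr hu)

open Classical in
noncomputable def pinnedMass (B : BN V G val) (z : ∀ v, val v) (S : Finset V)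
    (φ : (∀ v, val v) → Prop) : ℝ :=
  ∑ a, if φ a ∧ ∀ v ∉ S, a v = z v then ∏ v ∈ S, B.cpt v a else 0

theorem pinnedMass_erase (B : BN V G val) (z : ∀ v, val v) {S : Finset V} {t : V} (ht : t ∈ S)
    (hsink : ∀ u ∈ S, ¬ G.E t u) {φ : (∀ v, val v) → Prop}
    (hφ : ∀ a x, φ (update a t x) ↔ φ a) :
    B.pinnedMass z S φ = B.pinnedMass z (S.erase t) φ := by
  classical
  let h : (∀ v, val v) → ℝ := fun a =>
    if φ a ∧ ∀ v ∉ S, a v = z v then ∏ v ∈ S.erase t, B.cpt v a else 0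
  have hh : ∀ a x, h (update a t x) = h a := by
    intro a x
    have hpin : (∀ v ∉ S, update a t x v = z v) ↔ ∀ v ∉ S, a v = z v :=
      forall₂_congr fun v hv => by rw [update_of_ne (ne_of_mem_of_not_mem ht hv).symm]
    have hprod : ∏ v ∈ S.erase t, B.cpt v (update a t x) = ∏ v ∈ S.erase t, B.cpt v a := by
      refine prod_congr rfl fun v hv => B.cpt_congr fun u hu => update_of_ne ?_ _ _
      rintro rfl
      rcases hu with rfl | hu
      · exact notMem_erase u S hv
      · exact hsink v (mem_of_mem_erase hv) hu
    simp only [h, hφ, hpin, hprod]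
  have hpin : ∀ a : ∀ v, val v,
      (∀ v ∉ S.erase t, a v = z v) ↔ a t = z t ∧ ∀ v ∉ S, a v = z v := fun a =>
    ⟨fun h => ⟨h t (notMem_erase t S), fun v hv => h v fun h' => hv (mem_of_mem_erase h')⟩,
      fun ⟨hat, ha⟩ v hv => if hvt : v = t then hvt ▸ hat
        else ha v fun hvS => hv (mem_erase.2 ⟨hvt, hvS⟩)⟩
  calc B.pinnedMass z S φ = ∑ a, B.cpt t a * h a := by
        refine sum_congr rfl fun a _ => ?_
        simp only [h, mul_ite, mul_zero]
        exact if_congr Iff.rfl (mul_prod_erase S _ ht).symm rfl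
    _ = ∑ a, if a t = z t then h a else 0 := by
        rw [Fintype.sum_eq_sum_ite_sum_update t (z t)]
        refine sum_congr rfl fun a _ => ?_
        simp only [hh, ← sum_mul, B.cpt_sum, one_mul]
    _ = B.pinnedMass z (S.erase t) φ := by
        refine sum_congr rfl fun a _ => ?_
        rw [← ite_and]
        exact if_congr (by rw [hpin]; tauto) rfl rfl

theorem pinnedMass_eq_of_subset (B : BN V G val) (z : ∀ v, val v) {A S : Finset V} (hAS : A ⊆ S)
    (hA : G.IsAncestral A) {φ : (∀ v, val v) → Prop} (hφ : DependsOn φ A) :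
    B.pinnedMass z S φ = B.pinnedMass z A φ := by
  induction S using Finset.strongInduction with
  | H S ih =>
  by_cases hSA : S ⊆ A
  · rw [Subset.antisymm hSA hAS]
  obtain ⟨t, ht, hsink⟩ := G.exists_sink (sdiff_nonempty.2 hSA)
  rw [mem_sdiff] at ht
  have htS : ∀ u ∈ S, ¬ G.E t u := fun u hu htu =>
    if huA : u ∈ A then ht.2 (hA htu huA) else hsink u (mem_sdiff.2 ⟨hu, huA⟩) htu
  have hφt : ∀ a x, φ (update a t x) ↔ φ a := fun a x =>
    iff_of_eq (hφ fun v hv => update_of_ne (ne_of_mem_of_not_mem hv ht.2) _ _)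
  rw [B.pinnedMass_erase z ht.1 htS hφt, ih _ (erase_ssubset ht.1)]
  exact fun v hv => mem_erase.2 ⟨ne_of_mem_of_not_mem hv ht.2, hAS hv⟩

theorem pr_eq_pinnedMass (B : BN V G val) (z : ∀ v, val v) {A : Finset V}
    (hA : G.IsAncestral A) {φ : (∀ v, val v) → Prop} (hφ : DependsOn φ A) :
    B.pr φ = B.pinnedMass z A φ := by
  classical
  rw [← B.pinnedMass_eq_of_subset z (subset_univ A) hA hφ]
  exact sum_congr rfl fun a _ => if_congr (by simp) rfl rfl

open Classical in
noncomputable def pinnedWeight (B : BN V G val) (z : ∀ v, val v) (K : Set V) (A : Finset V)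
    (a : ∀ v, val v) : ℝ :=
  if ∀ v ∈ K, a v = z v then ∏ v ∈ A, B.cpt v a else 0

theorem pr_and_eq_sum_pinnedWeight (B : BN V G val) (z : ∀ v, val v) {Z : Set V}
    {A : Finset V} (hA : G.IsAncestral A) (hZA : Z ⊆ A) {P : (∀ v, val v) → Prop}
    [DecidablePred P] (hP : DependsOn P A) :
    B.pr (fun a => P a ∧ ∀ v ∈ Z, a v = z v) =
      ∑ a, if P a then B.pinnedWeight z (Z ∪ (↑A)ᶜ) A a else 0 := by
  classical
  have hφ : DependsOn (fun a => P a ∧ ∀ v ∈ Z, a v = z v) A := fun a b hab =>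
    congr_arg₂ And (hP hab) (propext (forall₂_congr fun v hv => by rw [hab v (hZA hv)]))
  rw [B.pr_eq_pinnedMass z hA hφ]
  refine sum_congr rfl fun a _ => ?_
  have hpin : (∀ v ∈ Z ∪ (↑A)ᶜ, a v = z v) ↔ (∀ v ∈ Z, a v = z v) ∧ ∀ v ∉ A, a v = z v := by
    simp only [Set.mem_union, or_imp, forall_and, Set.mem_compl_iff, mem_coe]
  simp only [pinnedWeight, hpin]
  split_ifs <;> first | rfl | (exfalso; tauto)

theorem cpt_piecewise_mul (B : BN V G val) {K S : Set V} [DecidablePred (· ∈ S)] {v : V}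
    (hS : ∀ u ∈ G.family v, ∀ u' ∈ G.family v, u ∉ K → u' ∉ K → u ∈ S → u' ∈ S)
    {a b : ∀ v, val v} (hab : ∀ u ∈ K, a u = b u) :
    B.cpt v (S.piecewise a b) * B.cpt v (S.piecewise b a) = B.cpt v a * B.cpt v b := by
  by_cases h : ∃ u ∈ G.family v, u ∉ K ∧ u ∈ S
  · obtain ⟨u, hu, huK, huS⟩ := h
    have hfam : ∀ u' ∈ G.family v, u' ∉ S → a u' = b u' := fun u' hu' hu'S =>
      hab u' (by_contra fun hu'K => hu'S (hS u hu u' hu' huK hu'K huS))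
    have h₁ : B.cpt v (S.piecewise a b) = B.cpt v a := B.cpt_congr fun u' hu' => by
      by_cases h' : u' ∈ S <;> simp [h', hfam u' hu']
    have h₂ : B.cpt v (S.piecewise b a) = B.cpt v b := B.cpt_congr fun u' hu' => by
      by_cases h' : u' ∈ S <;> simp [h', hfam u' hu']
    rw [h₁, h₂]
  · push Not at h
    have hfam : ∀ u' ∈ G.family v, u' ∈ S → a u' = b u' := fun u' hu' hu'S =>
      hab u' (by_contra fun hu'K => h u' hu' hu'K hu'S)
    have h₁ : B.cpt v (S.piecewise a b) = B.cpt v b := B.cpt_congr fun u' hu' => by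
      by_cases h' : u' ∈ S <;> simp [h', hfam u' hu']
    have h₂ : B.cpt v (S.piecewise b a) = B.cpt v a := B.cpt_congr fun u' hu' => by
      by_cases h' : u' ∈ S <;> simp [h', hfam u' hu']
    rw [h₁, h₂, mul_comm]

theorem pinnedWeight_piecewise_mul (B : BN V G val) (z : ∀ v, val v) {K : Set V}
    {A : Finset V} {S : Set V} [DecidablePred (· ∈ S)]
    (hS : ∀ v ∈ A, ∀ u ∈ G.family v, ∀ u' ∈ G.family v, u ∉ K → u' ∉ K → u ∈ S → u' ∈ S)
    (a b : ∀ v, val v) :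
    B.pinnedWeight z K A (S.piecewise a b) * B.pinnedWeight z K A (S.piecewise b a) =
      B.pinnedWeight z K A a * B.pinnedWeight z K A b := by
  classical
  have hpin : ∀ {a b : ∀ v, val v}, (∀ v ∈ K, a v = z v) → (∀ v ∈ K, b v = z v) →
      ∀ v ∈ K, S.piecewise a b v = z v := fun ha hb v hv => by
    by_cases hvS : v ∈ S <;> simp [hvS, ha v hv, hb v hv]
  have hinv : ∀ a b : ∀ v, val v, S.piecewise (S.piecewise a b) (S.piecewise b a) = a :=
    fun a b => funext fun v => by by_cases hvS : v ∈ S <;> simp [hvS]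
  unfold pinnedWeight
  by_cases hab : (∀ v ∈ K, a v = z v) ∧ ∀ v ∈ K, b v = z v
  · obtain ⟨ha, hb⟩ := hab
    rw [if_pos (hpin ha hb), if_pos (hpin hb ha), if_pos ha, if_pos hb, ← prod_mul_distrib,
      ← prod_mul_distrib]
    exact prod_congr rfl fun v hv =>
      B.cpt_piecewise_mul (hS v hv) fun u hu => (ha u hu).trans (hb u hu).symm
  · have hmix : ¬ ((∀ v ∈ K, S.piecewise a b v = z v) ∧ ∀ v ∈ K, S.piecewise b a v = z v) :=
      fun ⟨h₁, h₂⟩ => hab ⟨hinv a b ▸ hpin h₁ h₂, hinv b a ▸ hpin h₂ h₁⟩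
    rw [not_and_or] at hab hmix
    rcases hab with h | h <;> rcases hmix with h' | h' <;> simp [h, h']

theorem pr_mul_pr_eq_of_family_subset {Z S : Set V} {A : Finset V} {X Y : V}
    (B : BN V G val) (z : ∀ v, val v) (hA : G.IsAncestral A) (hZA : Z ⊆ A) (hXA : X ∈ A)
    (hYA : Y ∈ A) (hXS : X ∈ S) (hYS : Y ∉ S)
    (hS : ∀ v ∈ A, ∀ u ∈ G.family v, ∀ u' ∈ G.family v, u ∉ Z → u' ∉ Z → u ∈ S → u' ∈ S)
    (x : val X) (y : val Y) :
    B.pr (fun a => a X = x ∧ a Y = y ∧ ∀ v ∈ Z, a v = z v) *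
        B.pr (fun a => ∀ v ∈ Z, a v = z v) =
      B.pr (fun a => a X = x ∧ ∀ v ∈ Z, a v = z v) *
        B.pr (fun a => a Y = y ∧ ∀ v ∈ Z, a v = z v) := by
  classical
  have hXY := B.pr_and_eq_sum_pinnedWeight z hA hZA (P := fun a => a X = x ∧ a Y = y)
    fun a b hab => by simp only [hab X hXA, hab Y hYA]
  have hC := B.pr_and_eq_sum_pinnedWeight z hA hZA (P := fun _ => True) fun _ _ _ => rfl
  simp only [and_assoc, true_and, if_true] at hXY hC
  rw [hXY, hC, B.pr_and_eq_sum_pinnedWeight z hA hZA fun a b hab => by simp only [hab X hXA],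
    B.pr_and_eq_sum_pinnedWeight z hA hZA fun a b hab => by simp only [hab Y hYA]]
  convert sum_ite_and_mul_sum_eq_of_piecewise S _
    (B.pinnedWeight_piecewise_mul z (K := Z ∪ (↑A)ᶜ) fun v hv u hu u' hu' huK hu'K =>
      hS v hv u hu u' hu' (fun h => huK (Or.inl h)) fun h => hu'K (Or.inl h))
    (P := (· X = x)) (Q := (· Y = y)) (fun a b hab => by simp only [hab X hXS])
    fun a b hab => by simp only [hab Y hYS]

end BN

/-- Soundness of d-separation: if `X` and `Y` are d-separated given `Z` in a DAG, then in
every Bayesian network parameterization of the DAG, `X` and `Y` are conditionally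
independent given `Z`. -/
theorem stmt6 {V : Type} [Fintype V] [DecidableEq V] {G : DAG V} {val : V → Type}
    [∀ v, Fintype (val v)] (B : BN V G val) (Z : Set V) (X Y : V)
    (hsep : ¬ G.DConn Z X Y) (x : val X) (y : val Y) (z : ∀ v, val v) :
    B.pr (fun a => a X = x ∧ a Y = y ∧ ∀ v ∈ Z, a v = z v) *
        B.pr (fun a => ∀ v ∈ Z, a v = z v) =
      B.pr (fun a => a X = x ∧ ∀ v ∈ Z, a v = z v) *
        B.pr (fun a => a Y = y ∧ ∀ v ∈ Z, a v = z v) := by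
  classical
  let T : Set V := insert X (insert Y Z)
  let A : Finset V := univ.filter (· ∈ G.ancestors T)
  have hA : ∀ v, v ∈ A ↔ v ∈ G.ancestors T := by simp [A]
  have hTA : ∀ v ∈ T, v ∈ A := fun v hv => (hA v).2 (G.subset_ancestors T hv)
  let S : Set V := {v | Relation.ReflTransGen (G.MoralAdj (G.ancestors T) Z) X v}
  refine B.pr_mul_pr_eq_of_family_subset z (S := S)
    (fun u v huv hv => (hA u).2 (G.isAncestral_ancestors T huv ((hA v).1 hv)))
    (fun v hv => hTA v (by simp [T, hv])) (hTA X (by simp [T])) (hTA Y (by simp [T])) .refl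
    (fun h => hsep (G.dConn_of_reflTransGen_moralAdj h)) ?_ x y
  exact fun v hv u hu u' hu' huZ hu'Z huS => huS.tail ⟨huZ, hu'Z, v, (hA v).1 hv, hu, hu'⟩
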